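/- For every environment model m, state q, and action a: max_σ Q_m(σ, q, a) = Q*_m(q, a), where the maximum is taken over all strategies σ. -/

import Mathlib

open scoped BigOperators

/-- A Markov decision process over finite state space `Q` and finite action space `A`:
transition probabilities `t`, reward function `r`, and discount factor `0 < γ < 1`. -/
structure MDP (Q A : Type*) [Fintype Q] [Fintype A] where
  /-- transition probabilities: `t q a` is a distribution over next states -/
  t : Q → A → Q → ℝ
  t_nonneg : ∀ q a q', 0 ≤ t q a q'
  t_sum : ∀ q a, (∑ q', t q a q') = 1
  /-- reward function -/
  r : Q → A → ℝ
  /-- discount factor -/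
  γ : ℝ
  γ_pos : 0 < γ
  γ_lt_one : γ < 1

/-- An environment model: an MDP with a distinguished "nothing" action `N`
labelling a zero-reward self-loop at every state. -/
structure EnvModel (Q A : Type*) [Fintype Q] [Fintype A] extends MDP Q A where
  /-- the distinguished "nothing" action -/
  N : A
  t_N : ∀ q, t q N q = 1
  r_N : ∀ q, r q N = 0

variable {Q A : Type*} [Fintype Q] [DecidableEq Q] [Fintype A] [DecidableEq A]

/-- `stepDist m σ i q q'`: the probability of being at state `q'` after `i` steps of
following the strategy `σ` from state `q`. -/
noncomputable def stepDist (m : MDP Q A) (σ : Q → A) : ℕ → Q → Q → ℝ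
  | 0 => fun q q' => if q = q' then 1 else 0
  | i + 1 => fun q q' => ∑ q'', stepDist m σ i q q'' * m.t q'' (σ q'') q'

/-- `V m σ q`: the expected total discounted reward of following strategy `σ` from
state `q`; it is the unique bounded solution of the Bellman equation
`V m σ q = r q (σ q) + γ * ∑ q', t q (σ q) q' * V m σ q'`. -/
noncomputable def V (m : MDP Q A) (σ : Q → A) (q : Q) : ℝ :=
  ∑' i : ℕ, m.γ ^ i * ∑ q', stepDist m σ i q q' * m.r q' (σ q')

/-- `V*_m(q) = max_σ V_m(σ,q)`. -/
noncomputable def Vstar (m : MDP Q A) (q : Q) : ℝ := ⨆ σ : Q → A, V m σ q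

/-- the set of optimal strategies -/
def opt (m : MDP Q A) : Set (Q → A) := {σ | ∀ q, V m σ q = Vstar m q}

/-- `Q_m(σ,q,a) = r(q,a) + γ * ∑_{q'} t(q,a)(q') * V_m(σ,q')`. -/
noncomputable def Qval (m : MDP Q A) (σ : Q → A) (q : Q) (a : A) : ℝ :=
  m.r q a + m.γ * ∑ q', m.t q a q' * V m σ q'

/-- `Q*_m(q,a) = r(q,a) + γ * ∑_{q'} t(q,a)(q') * V*_m(q')`. -/
noncomputable def Qstar (m : MDP Q A) (q : Q) (a : A) : ℝ :=
  m.r q a + m.γ * ∑ q', m.t q a q' * Vstar m q'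

/-- The set `U_m` of useless state-action pairs. -/
def Uset (m : EnvModel Q A) : Set (Q × A) :=
  {p | p.2 ≠ m.N ∧ ∀ σ : Q → A, Qval m.toMDP σ p.1 p.2 ≤ 0}

open Classical in
/-- `U(σ)`: replace `σ`'s action by the nothing action `N` at exactly those states `q`
with `⟨q, σ q⟩ ∈ U`. -/
noncomputable def applyU (m : EnvModel Q A) (U : Set (Q × A)) (σ : Q → A) : Q → A :=
  fun q => if (q, σ q) ∈ U then m.N else σ q

/-- A contingency `κ` is consistent with `m` when it only picks states of positive
transition probability. -/
def Consistent (m : MDP Q A) (κ : Q → A → ℕ → Q) : Prop :=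
  ∀ q a i, 0 < m.t q a (κ q a i)

/-- One step of the execution determined by `σ` and `κ`: the current state together
with the occurrence counts of each state-action pair so far. -/
def execStep (σ : Q → A) (κ : Q → A → ℕ → Q) :
    Q × (Q × A → ℕ) → Q × (Q × A → ℕ) :=
  fun s =>
    (κ s.1 (σ s.1) (s.2 (s.1, σ s.1)),
     fun p => if p = (s.1, σ s.1) then s.2 p + 1 else s.2 p)

/-- the `i`-th state of the execution `m(q,κ,σ)` -/
def execState (σ : Q → A) (κ : Q → A → ℕ → Q) (q : Q) (i : ℕ) : Q :=
  ((execStep σ κ)^[i] (q, fun _ => 0)).1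

/-- the execution `m(q,κ,σ) = [q₀, a₁, q₁, a₂, …]`, as the sequence of pairs
`i ↦ (q_i, a_{i+1})` (so `a_{i+1} = σ q_i`). -/
def execOf (σ : Q → A) (κ : Q → A → ℕ → Q) (q : Q) (i : ℕ) : Q × A :=
  (execState σ κ q i, σ (execState σ κ q i))

/-- the execution flattened into the alternating sequence `[q₀, a₁, q₁, a₂, …]`
(position `2i` holds `q_i`, position `2i+1` holds `a_{i+1}`). -/
def flatExec (e : ℕ → Q × A) (j : ℕ) : Q ⊕ A :=
  if j % 2 = 0 then Sum.inl (e (j / 2)).1 else Sum.inr (e (j / 2)).2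

open Classical in
/-- `active(e)`: the prefix of the alternating sequence of `e` strictly before the
first occurrence of the nothing action `N` (all of it if `N` never occurs);
positions past the cut-off are `none`. -/
noncomputable def activeSeq (N : A) (e : ℕ → Q × A) (j : ℕ) : Option (Q ⊕ A) :=
  if ∃ i, 2 * i + 1 ≤ j ∧ (e i).2 = N then none else some (flatExec e j)

/-- `f` is a subsequence of `g` (for possibly-cut-off sequences). -/
def OptSubseq {X : Type*} (f g : ℕ → Option X) : Prop :=
  ∃ φ : ℕ → ℕ, StrictMono φ ∧ ∀ j, f j ≠ none → f j = g (φ j)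

/-- `e₁` is a proper sub-execution of `e₂`: `active(e₁)` is a proper subsequence
of `active(e₂)`. -/
def ProperSubexec (N : A) (e₁ e₂ : ℕ → Q × A) : Prop :=
  OptSubseq (activeSeq N e₁) (activeSeq N e₂) ∧ activeSeq N e₁ ≠ activeSeq N e₂

/-- `σ' ≺ σ`: for every consistent contingency `κ` and state `q`, `m(q,κ,σ')` is a
proper sub-execution of or equal to `m(q,κ,σ)`, and for at least one consistent
contingency and state it is a proper sub-execution. -/
def prec (m : EnvModel Q A) (σ' σ : Q → A) : Prop :=
  (∀ κ, Consistent m.toMDP κ → ∀ q,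
      ProperSubexec m.N (execOf σ' κ q) (execOf σ κ q) ∨ execOf σ' κ q = execOf σ κ q) ∧
  (∃ κ q, Consistent m.toMDP κ ∧ ProperSubexec m.N (execOf σ' κ q) (execOf σ κ q))

/-- `opt*(m)`: optimal strategies that are non-redundant. -/
def optStar (m : EnvModel Q A) : Set (Q → A) :=
  {σ | σ ∈ opt m.toMDP ∧ ¬∃ σ' ∈ opt m.toMDP, prec m σ' σ}

/-- A behavior `[q₀, a₁, q₁, …, a_n, q_n]`: the list of pairs `(q_i, a_{i+1})`
for `0 ≤ i < n` together with the final state `q_n`. -/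
structure Behavior (Q A : Type*) where
  steps : List (Q × A)
  last : Q

/-- `strg(b)`: the strategies that could have produced the behavior `b`. -/
def strg (b : Behavior Q A) : Set (Q → A) :=
  {σ | ∀ p ∈ b.steps, σ p.1 = p.2}

/-- the behavior flattened into the alternating list `[q₀, a₁, q₁, …, a_n, q_n]` -/
def flatBehavior (b : Behavior Q A) : List (Q ⊕ A) :=
  (b.steps.flatMap fun p => [Sum.inl p.1, Sum.inr p.2]) ++ [Sum.inl b.last]

/-- the behavior `b` is a subsequence of the execution `e` -/
def BehvSubseq (b : Behavior Q A) (e : ℕ → Q × A) : Prop :=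
  ∃ φ : ℕ → ℕ, StrictMono φ ∧
    ∀ j (h : j < (flatBehavior b).length),
      (flatBehavior b).get ⟨j, h⟩ = flatExec e (φ j)

/-- `behv*(m)`: behaviors exhibited by some non-redundant optimal strategy under some
consistent contingency from some state. -/
def behvStar (m : EnvModel Q A) : Set (Behavior Q A) :=
  {b | ∃ σ ∈ optStar m, ∃ κ q, Consistent m.toMDP κ ∧ BehvSubseq b (execOf σ κ q)}

/-- the state `q_{i+1}` following the `i`-th step of the behavior `b` -/
def nextStateOf (b : Behavior Q A) (i : ℕ) : Q :=
  if h : i + 1 < b.steps.length then (b.steps.get ⟨i + 1, h⟩).1 else b.last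

/-- `b` could actually be observed: `t(q_i, a_{i+1})(q_{i+1}) > 0` for all `0 ≤ i < n`. -/
def Observable (m : MDP Q A) (b : Behavior Q A) : Prop :=
  ∀ i (h : i < b.steps.length),
    0 < m.t (b.steps.get ⟨i, h⟩).1 (b.steps.get ⟨i, h⟩).2 (nextStateOf b i)

/-- `r* = max_{q,a} |r(q,a)|` -/
noncomputable def rstar (m : MDP Q A) : ℝ := ⨆ p : Q × A, |m.r p.1 p.2|

/-- the reward function of `fix(m,b)`, defined recursively along the behavior -/
noncomputable def fixR (ω : ℝ) : (Q → A → ℝ) → List (Q × A) → Q → A → ℝ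
  | r, [] => r
  | r, s :: rest => fixR ω (fun q a => if q = s.1 ∧ a ≠ s.2 then -ω else r q a) rest

/-- `fix(m,b)`: the MDP `m` with its reward function modified so that deviating from
the actions of `b` at the states of `b` incurs the penalty `-ω`. -/
noncomputable def fixMDP (m : MDP Q A) (ω : ℝ) (b : Behavior Q A) : MDP Q A :=
  { m with r := fixR ω m.r b.steps }

lemma stepDist_nonneg (m : MDP Q A) (σ : Q → A) :
    ∀ (i : ℕ) (q q' : Q), 0 ≤ stepDist m σ i q q' := by
  intro i
  induction i with
  | zero => intro q q'; simp only [stepDist]; split <;> norm_num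
  | succ i ih =>
    intro q q'
    exact Finset.sum_nonneg fun q'' _ => mul_nonneg (ih q q'') (m.t_nonneg _ _ _)

lemma stepDist_sum (m : MDP Q A) (σ : Q → A) :
    ∀ (i : ℕ) (q : Q), ∑ q', stepDist m σ i q q' = 1 := by
  intro i
  induction i with
  | zero => intro q; simp [stepDist]
  | succ i ih =>
    intro q
    simp only [stepDist]
    rw [Finset.sum_comm]
    simp_rw [← Finset.mul_sum, m.t_sum, mul_one]
    exact ih q

lemma stepDist_succ_left (m : MDP Q A) (σ : Q → A) :
    ∀ (i : ℕ) (q q' : Q),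
      stepDist m σ (i + 1) q q' = ∑ q₁, m.t q (σ q) q₁ * stepDist m σ i q₁ q' := by
  intro i
  induction i with
  | zero =>
    intro q q'
    simp [stepDist, Finset.sum_ite_eq, Finset.sum_ite_eq']
  | succ i ih =>
    intro q q'
    have hL : stepDist m σ (i + 1 + 1) q q'
        = ∑ q'', stepDist m σ (i + 1) q q'' * m.t q'' (σ q'') q' := rfl
    rw [hL]
    simp_rw [ih q, Finset.sum_mul]
    rw [Finset.sum_comm]
    refine Finset.sum_congr rfl fun q₁ _ => ?_
    have hR : stepDist m σ (i + 1) q₁ q'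
        = ∑ q'', stepDist m σ i q₁ q'' * m.t q'' (σ q'') q' := rfl
    rw [hR, Finset.mul_sum]
    exact Finset.sum_congr rfl fun q'' _ => by ring

lemma summable_Vterm (m : MDP Q A) (σ : Q → A) (q : Q) :
    Summable (fun i => m.γ ^ i * ∑ q', stepDist m σ i q q' * m.r q' (σ q')) := by
  set C : ℝ := ∑ p : Q × A, |m.r p.1 p.2| with hC
  apply Summable.of_abs
  refine Summable.of_nonneg_of_le (fun i => abs_nonneg _) (fun i => ?_)
    ((summable_geometric_of_lt_one m.γ_pos.le m.γ_lt_one).mul_right C)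
  rw [abs_mul, abs_pow, abs_of_pos m.γ_pos]
  refine mul_le_mul_of_nonneg_left ?_ (pow_nonneg m.γ_pos.le i)
  calc |∑ q', stepDist m σ i q q' * m.r q' (σ q')|
      ≤ ∑ q', |stepDist m σ i q q' * m.r q' (σ q')| := Finset.abs_sum_le_sum_abs _ _
    _ ≤ ∑ q', stepDist m σ i q q' * C := by
        refine Finset.sum_le_sum fun q' _ => ?_
        rw [abs_mul, abs_of_nonneg (stepDist_nonneg m σ i q q')]
        exact mul_le_mul_of_nonneg_left
          (Finset.single_le_sum (f := fun p : Q × A => |m.r p.1 p.2|)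
            (fun _ _ => abs_nonneg _) (Finset.mem_univ (q', σ q')))
          (stepDist_nonneg m σ i q q')
    _ = C := by rw [← Finset.sum_mul, stepDist_sum, one_mul]

lemma V_bellman (m : MDP Q A) (σ : Q → A) (q : Q) :
    V m σ q = m.r q (σ q) + m.γ * ∑ q', m.t q (σ q) q' * V m σ q' := by
  have hs : ∀ q₁, Summable
      (fun i => m.γ ^ i * ∑ q', stepDist m σ i q₁ q' * m.r q' (σ q')) :=
    fun q₁ => summable_Vterm m σ q₁
  rw [V, Summable.tsum_eq_zero_add (hs q)]
  congr 1
  · simp [stepDist, Finset.sum_ite_eq, Finset.sum_ite_eq']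
  have key : ∀ i, m.γ ^ (i + 1) * ∑ q', stepDist m σ (i + 1) q q' * m.r q' (σ q')
      = ∑ q₁, (m.γ * m.t q (σ q) q₁) *
          (m.γ ^ i * ∑ q', stepDist m σ i q₁ q' * m.r q' (σ q')) := by
    intro i
    have h1 : ∑ q', stepDist m σ (i + 1) q q' * m.r q' (σ q')
        = ∑ q₁, m.t q (σ q) q₁ * ∑ q', stepDist m σ i q₁ q' * m.r q' (σ q') := by
      simp_rw [stepDist_succ_left, Finset.sum_mul]
      rw [Finset.sum_comm]
      simp_rw [Finset.mul_sum]
      exact Finset.sum_congr rfl fun q₁ _ =>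
        Finset.sum_congr rfl fun q' _ => by ring
    rw [h1, Finset.mul_sum]
    exact Finset.sum_congr rfl fun q₁ _ => by ring
  calc (∑' i, m.γ ^ (i + 1) * ∑ q', stepDist m σ (i + 1) q q' * m.r q' (σ q'))
      = ∑' i, ∑ q₁, (m.γ * m.t q (σ q) q₁) *
          (m.γ ^ i * ∑ q', stepDist m σ i q₁ q' * m.r q' (σ q')) := tsum_congr key
    _ = ∑ q₁, ∑' i, (m.γ * m.t q (σ q) q₁) *
          (m.γ ^ i * ∑ q', stepDist m σ i q₁ q' * m.r q' (σ q')) :=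
        Summable.tsum_finsetSum fun q₁ _ => (hs q₁).mul_left _
    _ = ∑ q₁, (m.γ * m.t q (σ q) q₁) * V m σ q₁ := by
        refine Finset.sum_congr rfl fun q₁ _ => ?_
        rw [tsum_mul_left]; rfl
    _ = m.γ * ∑ q', m.t q (σ q) q' * V m σ q' := by
        rw [Finset.mul_sum]
        exact Finset.sum_congr rfl fun q₁ _ => by ring

lemma le_V_of_le_step [Nonempty Q] (m : MDP Q A) (τ : Q → A) (f : Q → ℝ)
    (hf : ∀ q, f q ≤ m.r q (τ q) + m.γ * ∑ q', m.t q (τ q) q' * f q') :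
    ∀ q, f q ≤ V m τ q := by
  obtain ⟨q0, -, hq0⟩ := Finset.exists_min_image Finset.univ
    (fun q => V m τ q - f q) ⟨Classical.arbitrary Q, Finset.mem_univ _⟩
  have hd : ∀ q, V m τ q0 - f q0 ≤ V m τ q - f q := fun q => hq0 q (Finset.mem_univ q)
  set d := V m τ q0 - f q0 with hdd
  have e1 : m.γ * ∑ q', m.t q0 (τ q0) q' * (V m τ q' - f q') ≤ d := by
    have hb := V_bellman m τ q0
    have hf0 := hf q0
    have hsub : ∑ q', m.t q0 (τ q0) q' * (V m τ q' - f q')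
        = (∑ q', m.t q0 (τ q0) q' * V m τ q') - ∑ q', m.t q0 (τ q0) q' * f q' := by
      rw [← Finset.sum_sub_distrib]
      exact Finset.sum_congr rfl fun _ _ => by ring
    rw [hsub, mul_sub]
    simp only [hdd]
    linarith
  have e2 : m.γ * d ≤ m.γ * ∑ q', m.t q0 (τ q0) q' * (V m τ q' - f q') := by
    refine mul_le_mul_of_nonneg_left ?_ m.γ_pos.le
    have : d = ∑ q', m.t q0 (τ q0) q' * d := by
      rw [← Finset.sum_mul, m.t_sum, one_mul]
    rw [this]
    exact Finset.sum_le_sum fun q' _ =>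
      mul_le_mul_of_nonneg_left (hd q') (m.t_nonneg _ _ _)
  have hγd : m.γ * d ≤ d := le_trans e2 e1
  have hdnn : 0 ≤ d := by nlinarith [m.γ_lt_one, m.γ_pos]
  intro q
  linarith [hd q]

lemma exists_improve [Nonempty Q] (m : MDP Q A) (σ1 σ2 : Q → A) :
    ∃ τ, ∀ q, V m σ1 q ≤ V m τ q ∧ V m σ2 q ≤ V m τ q := by
  classical
  set τ := fun q => if V m σ2 q ≤ V m σ1 q then σ1 q else σ2 q with hτ
  set f := fun q => max (V m σ1 q) (V m σ2 q) with hfdef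
  have h : ∀ q, f q ≤ V m τ q := by
    refine le_V_of_le_step m τ f ?_
    intro q
    by_cases hc : V m σ2 q ≤ V m σ1 q
    · have hτq : τ q = σ1 q := if_pos hc
      have hfq : f q = V m σ1 q := max_eq_left hc
      rw [hτq, hfq, V_bellman m σ1 q]
      refine add_le_add_right (mul_le_mul_of_nonneg_left
        (Finset.sum_le_sum fun q' _ => mul_le_mul_of_nonneg_left
          (le_max_left _ _) (m.t_nonneg _ _ _)) m.γ_pos.le) _
    · have hτq : τ q = σ2 q := if_neg hc
      have hfq : f q = V m σ2 q := max_eq_right (le_of_not_ge hc)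
      rw [hτq, hfq, V_bellman m σ2 q]
      refine add_le_add_right (mul_le_mul_of_nonneg_left
        (Finset.sum_le_sum fun q' _ => mul_le_mul_of_nonneg_left
          (le_max_right _ _) (m.t_nonneg _ _ _)) m.γ_pos.le) _
  exact ⟨τ, fun q => ⟨le_trans (le_max_left _ _) (h q),
    le_trans (le_max_right _ _) (h q)⟩⟩

lemma exists_optimal [Nonempty Q] [Nonempty A] (m : MDP Q A) :
    ∃ τ, ∀ σ q, V m σ q ≤ V m τ q := by
  classical
  have main : ∀ l : List (Q → A), ∃ τ, ∀ σ ∈ l, ∀ q, V m σ q ≤ V m τ q := by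
    intro l
    induction l with
    | nil => exact ⟨fun _ => Classical.arbitrary A, by simp⟩
    | cons σ1 l ih =>
      obtain ⟨τ0, hτ0⟩ := ih
      obtain ⟨τ, hτ⟩ := exists_improve m σ1 τ0
      refine ⟨τ, ?_⟩
      intro σ hσ q
      rcases List.mem_cons.mp hσ with rfl | hσ
      · exact (hτ q).1
      · exact le_trans (hτ0 σ hσ q) (hτ q).2
  obtain ⟨τ, hτ⟩ := main (Finset.univ : Finset (Q → A)).toList
  exact ⟨τ, fun σ q => hτ σ (by simp [Finset.mem_toList]) q⟩

/-- `max_σ Q_m(σ, q, a) = Q*_m(q, a)`. -/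
theorem iSup_Qval_eq_Qstar
    {Q A : Type*} [Fintype Q] [DecidableEq Q] [Fintype A] [DecidableEq A]
    (m : EnvModel Q A) (q : Q) (a : A) :
    (⨆ σ : Q → A, Qval m.toMDP σ q a) = Qstar m.toMDP q a := by
  classical
  haveI : Nonempty Q := ⟨q⟩
  haveI : Nonempty A := ⟨m.N⟩
  obtain ⟨τ, hτ⟩ := exists_optimal m.toMDP
  have hV : ∀ q', Vstar m.toMDP q' = V m.toMDP τ q' := by
    intro q'
    refine le_antisymm (ciSup_le fun σ => hτ σ q') (le_ciSup (f := fun σ : Q → A => V m.toMDP σ q') ⟨V m.toMDP τ q', ?_⟩ τ)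
    rintro x ⟨σ, rfl⟩
    exact hτ σ q'
  have hQs : Qstar m.toMDP q a = Qval m.toMDP τ q a := by
    unfold Qstar Qval
    simp_rw [hV]
  have hle : ∀ σ, Qval m.toMDP σ q a ≤ Qval m.toMDP τ q a := fun σ =>
    add_le_add_right (mul_le_mul_of_nonneg_left
      (Finset.sum_le_sum fun q' _ => mul_le_mul_of_nonneg_left
        (hτ σ q') (m.t_nonneg q a q')) m.toMDP.γ_pos.le) _
  have hsup : (⨆ σ : Q → A, Qval m.toMDP σ q a) = Qval m.toMDP τ q a := by
    refine le_antisymm (ciSup_le hle) (le_ciSup (f := fun σ : Q → A => Qval m.toMDP σ q a) ⟨Qval m.toMDP τ q a, ?_⟩ τ)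
    rintro x ⟨σ, rfl⟩
    exact hle σ
  rw [hsup, hQs]
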